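/- Consider the cubic polynomial P(t) = A t³ + B t² + C t + D with A = ν²(1−α)⁶, B = 3ν²α²(1−α)⁴, C = 2α³[ν²(2−α−4α²+3α³) + σ²(2−5α+4α²−α³)], D = 2α⁴[ν²(2α²−1) + σ²(2α−1)], where ν, σ > 0. Then the discriminant of P, namely −27A²D² + 18ABCD − 4AC³ − 4B³D + B²C², is negative for all sufficiently small α ≠ 0; consequently P has exactly one real root. -/

import Mathlib

/-!
Write `B = α² b`, `C = α³ c`, `D = α⁴ d` with `b, c, d` continuous in `α`. Then the discriminant is
`α⁸ (-27 A² d² + O(α))`, and at `α = 0` the bracket is `-27 ν⁴ · 4 (ν² + σ²)² < 0`, so the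
discriminant is negative for small `α ≠ 0`. A real cubic with negative discriminant has exactly one
real root: if it had two, `s ≠ t`, dividing out `s` leaves a quadratic with the real root `t`, and
the discriminant of the cubic is a square multiple of the (then nonnegative) discriminant of that
quadratic.
-/

open Filter Topology Polynomial

namespace Cubic

theorem eval_toPoly {R : Type*} [CommRing R] (P : Cubic R) (t : R) :
    P.toPoly.eval t = P.a * t ^ 3 + P.b * t ^ 2 + P.c * t + P.d := by
  simp [toPoly]

section Ordered

variable {R : Type*} [CommRing R] [LinearOrder R] [IsStrictOrderedRing R] {P : Cubic R}

theorem discr_nonneg_of_two_roots {s t : R} (hst : s ≠ t)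
    (hs : P.a * s ^ 3 + P.b * s ^ 2 + P.c * s + P.d = 0)
    (ht : P.a * t ^ 3 + P.b * t ^ 2 + P.c * t + P.d = 0) : 0 ≤ P.discr := by
  set q : R → R := fun x => P.a * (x * x) + (P.b + P.a * s) * x + (P.c + P.b * s + P.a * s ^ 2)
  have hqt : q t = 0 := by
    have hfac : (t - s) * q t = 0 := by linear_combination ht - hs
    exact (mul_eq_zero.1 hfac).resolve_left (sub_ne_zero.2 hst.symm)
  have hdiscr : P.discr = (q s * (2 * P.a * t + (P.b + P.a * s))) ^ 2 := by
    rw [mul_pow, ← discrim_eq_sq_of_quadratic_eq_zero hqt, discrim]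
    have hd : P.d = -(P.a * s ^ 3 + P.b * s ^ 2 + P.c * s) := by linear_combination hs
    simp only [discr, q, hd]
    ring
  exact hdiscr ▸ sq_nonneg _

end Ordered

variable {P : Cubic ℝ}

theorem exists_root_of_a_pos (ha : 0 < P.a) :
    ∃ t, P.a * t ^ 3 + P.b * t ^ 2 + P.c * t + P.d = 0 := by
  -- `Q.toPoly.eval x = P.toPoly.eval (-x)`
  let Q : Cubic ℝ := ⟨-P.a, P.b, -P.c, P.d⟩
  have hP : Tendsto P.toPoly.eval atTop atTop :=
    P.toPoly.tendsto_atTop_of_leadingCoeff_nonneg (by simp [degree_of_a_ne_zero ha.ne'])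
      (leadingCoeff_of_a_ne_zero ha.ne' ▸ ha.le)
  have hQ : Tendsto Q.toPoly.eval atTop atBot :=
    Q.toPoly.tendsto_atBot_of_leadingCoeff_nonpos
      (by simp [Q, degree_of_a_ne_zero' (neg_ne_zero.2 ha.ne')])
      (by simp [Q, leadingCoeff_of_a_ne_zero' (neg_ne_zero.2 ha.ne'), ha.le])
  obtain ⟨x, hx⟩ := (hQ.eventually_le_atBot 0).exists
  obtain ⟨y, hy⟩ := (hP.eventually_ge_atTop 0).exists
  have hx' : P.toPoly.eval (-x) ≤ 0 := by
    simp only [eval_toPoly, Q] at hx ⊢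
    linarith
  obtain ⟨t, ht⟩ := intermediate_value_univ (-x) y P.toPoly.continuous ⟨hx', hy⟩
  exact ⟨t, by rw [← eval_toPoly]; exact ht⟩

theorem exists_root (ha : P.a ≠ 0) :
    ∃ t, P.a * t ^ 3 + P.b * t ^ 2 + P.c * t + P.d = 0 := by
  rcases ha.lt_or_gt with hneg | hpos
  · obtain ⟨t, ht⟩ := exists_root_of_a_pos (P := ⟨-P.a, -P.b, -P.c, -P.d⟩) (neg_pos.2 hneg)
    exact ⟨t, by linear_combination -ht⟩
  · exact exists_root_of_a_pos hpos

theorem existsUnique_root_of_discr_neg (ha : P.a ≠ 0) (hdiscr : P.discr < 0) :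
    ∃! t, P.a * t ^ 3 + P.b * t ^ 2 + P.c * t + P.d = 0 := by
  obtain ⟨s, hs⟩ := exists_root ha
  refine ⟨s, hs, fun t ht => ?_⟩
  by_contra hts
  exact hdiscr.not_ge (discr_nonneg_of_two_roots hts ht hs)

theorem eventually_discr_neg {a b c d : ℝ → ℝ} (ha : ContinuousAt a 0)
    (hb : ContinuousAt b 0) (hc : ContinuousAt c 0) (hd : ContinuousAt d 0)
    (ha0 : a 0 ≠ 0) (hd0 : d 0 ≠ 0) :
    ∀ᶠ α in 𝓝[≠] 0, (⟨a α, α ^ 2 * b α, α ^ 3 * c α, α ^ 4 * d α⟩ : Cubic ℝ).discr < 0 := by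
  let g : ℝ → ℝ := fun α => -27 * a α ^ 2 * d α ^ 2
    + α * (18 * a α * b α * c α * d α - 4 * a α * c α ^ 3)
    + α ^ 2 * (b α ^ 2 * c α ^ 2 - 4 * b α ^ 3 * d α)
  have hg : ContinuousAt g 0 := by fun_prop
  have hg0 : g 0 < 0 := by
    have : 0 < a 0 ^ 2 * d 0 ^ 2 := by positivity
    simp only [g]
    linarith
  have hgneg : ∀ᶠ α in 𝓝[≠] 0, g α < 0 :=
    nhdsWithin_le_nhds (hg.eventually (gt_mem_nhds hg0))
  filter_upwards [hgneg, self_mem_nhdsWithin] with α hα hα0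
  have hdiscr : (⟨a α, α ^ 2 * b α, α ^ 3 * c α, α ^ 4 * d α⟩ : Cubic ℝ).discr = α ^ 8 * g α := by
    simp only [Cubic.discr, g]
    ring
  rw [hdiscr]
  exact mul_neg_of_pos_of_neg (Even.pow_pos (by decide) hα0) hα

end Cubic

theorem cubic_discriminant_negative_general (ν σ : ℝ) (hν : 0 < ν) :
    ∃ ε > 0, ∀ α : ℝ, α ≠ 0 → |α| < ε →
      (let A := ν ^ 2 * (1 - α) ^ 6
       let B := 3 * ν ^ 2 * α ^ 2 * (1 - α) ^ 4
       let C := 2 * α ^ 3 * (ν ^ 2 * (2 - α - 4 * α ^ 2 + 3 * α ^ 3)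
         + σ ^ 2 * (2 - 5 * α + 4 * α ^ 2 - α ^ 3))
       let D := 2 * α ^ 4 * (ν ^ 2 * (2 * α ^ 2 - 1) + σ ^ 2 * (2 * α - 1))
       (-27 * A ^ 2 * D ^ 2 + 18 * A * B * C * D - 4 * A * C ^ 3
          - 4 * B ^ 3 * D + B ^ 2 * C ^ 2 < 0)
         ∧ ∃! t : ℝ, A * t ^ 3 + B * t ^ 2 + C * t + D = 0) := by
  have hdiscr := Cubic.eventually_discr_neg (a := fun α => ν ^ 2 * (1 - α) ^ 6)
    (b := fun α => 3 * ν ^ 2 * (1 - α) ^ 4)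
    (c := fun α => 2 * (ν ^ 2 * (2 - α - 4 * α ^ 2 + 3 * α ^ 3)
      + σ ^ 2 * (2 - 5 * α + 4 * α ^ 2 - α ^ 3)))
    (d := fun α => 2 * (ν ^ 2 * (2 * α ^ 2 - 1) + σ ^ 2 * (2 * α - 1)))
    (by fun_prop) (by fun_prop) (by fun_prop) (by fun_prop) (by simp [hν.ne'])
    (by nlinarith [sq_nonneg σ, pow_pos hν 2])
  have hA : ∀ᶠ α in 𝓝 (0 : ℝ), 0 < ν ^ 2 * (1 - α) ^ 6 :=
    (eventually_lt_nhds one_pos).mono fun α hα => by have := sub_pos.2 hα; positivity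
  obtain ⟨ε, hε, h⟩ := Metric.mem_nhdsWithin_iff.1 (hdiscr.and (nhdsWithin_le_nhds hA))
  refine ⟨ε, hε, fun α hα0 hαε => ?_⟩
  obtain ⟨hneg, hApos⟩ := h ⟨by simpa using hαε, hα0⟩
  intro A B C D
  let P : Cubic ℝ := ⟨A, B, C, D⟩
  have hP : P.discr < 0 := by
    convert hneg using 1
    simp only [Cubic.discr, P, A, B, C, D]
    ring
  refine ⟨?_, P.existsUnique_root_of_discr_neg hApos.ne' hP⟩
  simp only [Cubic.discr, P] at hP
  linarith

theorem cubic_discriminant_negative (ν σ : ℝ) (hν : 0 < ν) (hσ : 0 < σ) :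
    ∃ ε > 0, ∀ α : ℝ, α ≠ 0 → |α| < ε →
      (let A := ν ^ 2 * (1 - α) ^ 6
       let B := 3 * ν ^ 2 * α ^ 2 * (1 - α) ^ 4
       let C := 2 * α ^ 3 * (ν ^ 2 * (2 - α - 4 * α ^ 2 + 3 * α ^ 3)
         + σ ^ 2 * (2 - 5 * α + 4 * α ^ 2 - α ^ 3))
       let D := 2 * α ^ 4 * (ν ^ 2 * (2 * α ^ 2 - 1) + σ ^ 2 * (2 * α - 1))
       (-27 * A ^ 2 * D ^ 2 + 18 * A * B * C * D - 4 * A * C ^ 3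
          - 4 * B ^ 3 * D + B ^ 2 * C ^ 2 < 0)
         ∧ ∃! t : ℝ, A * t ^ 3 + B * t ^ 2 + C * t + D = 0) :=
  cubic_discriminant_negative_general ν σ hν
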